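/- arXiv:1210.3236 — 10 statements merged into one kernel-verified Lean document; each statement's English description precedes it below -/
import Mathlib

section
/- The Benkart–Witherspoon R-matrix R satisfies the quadratic relation R² = (1 − r s⁻¹) R + r s⁻¹ I on V ⊗ V, i.e. (R − I)(R + r s⁻¹ I) = 0 as an n² × n² matrix identity. -/
open Matrix Kronecker BigOperators

/-- The `n × n` matrix unit `E i j` over `ℂ`. -/
noncomputable def E (n : ℕ) (i j : Fin n) : Matrix (Fin n) (Fin n) ℂ :=
  Matrix.single i j 1

/-- The Benkart–Witherspoon R-matrix on `V ⊗ V`. -/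
noncomputable def BWR (n : ℕ) (r s : ℂ) : Matrix (Fin n × Fin n) (Fin n × Fin n) ℂ :=
  (∑ i : Fin n, E n i i ⊗ₖ E n i i)
  + r • (∑ i : Fin n, ∑ j : Fin n, if i < j then E n j i ⊗ₖ E n i j else 0)
  + s⁻¹ • (∑ i : Fin n, ∑ j : Fin n, if i < j then E n i j ⊗ₖ E n j i else 0)
  + (1 - r * s⁻¹) • (∑ i : Fin n, ∑ j : Fin n, if i < j then E n j j ⊗ₖ E n i i else 0)


/-! Row `(a, b)` of `R` is supported on `{(a, b), (b, a)}`, so `R` acts on the line spanned by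
`v_a ⊗ v_a` as the identity and on the plane spanned by `v_a ⊗ v_b, v_b ⊗ v_a` (`a < b`) by a
`2 × 2` matrix of trace `1 - r s⁻¹` and determinant `-r s⁻¹`. Cayley–Hamilton on each block gives
`(R - 1)(R + r s⁻¹) = 0`; row by row this is a linear identity between the two basis vectors. -/

lemma E_kronecker_E_apply {n : ℕ} (i j k l : Fin n) (x y : Fin n × Fin n) :
    (E n i j ⊗ₖ E n k l) x y =
      if x.1 = i then if x.2 = k then if y = (j, l) then 1 else 0 else 0 else 0 := by
  rw [E, E, single_kronecker_single, single_apply, mul_one]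
  simp only [Prod.ext_iff, ite_and, eq_comm]

-- Moving the order condition inwards lets `Finset.sum_ite_eq` collapse the double sums in `BWR`.
lemma ite_lt_ite_comm {α β : Type*} [LinearOrder α] [Zero β] (i j : α) (P : Prop) [Decidable P] (c : β) :
    (if i < j then if P then c else 0 else 0) = if P then if i < j then c else 0 else 0 := by
  split_ifs <;> rfl

lemma BWR_row (n : ℕ) (r s : ℂ) (a b : Fin n) :
    (BWR n r s).row (a, b) = (if b = a then Pi.single (a, a) 1 else 0)
      + r • (if b < a then Pi.single (b, a) 1 else 0)
      + s⁻¹ • (if a < b then Pi.single (b, a) 1 else 0)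
      + (1 - r * s⁻¹) • (if b < a then Pi.single (a, b) 1 else 0) := by
  funext y
  simp only [row_apply, BWR, Matrix.add_apply, Matrix.smul_apply, Matrix.sum_apply,
    E_kronecker_E_apply, apply_ite (fun M : Matrix _ _ ℂ => M (a, b) y), Matrix.zero_apply,
    ite_lt_ite_comm]
  simp only [Finset.sum_ite_irrel, Finset.sum_const_zero, Finset.sum_ite_eq, Finset.mem_univ,
    if_true, Pi.add_apply, Pi.smul_apply, apply_ite (fun v : Fin n × Fin n → ℂ => v y),
    Pi.zero_apply, smul_eq_mul, mul_ite, mul_one, mul_zero, Pi.single_apply, ite_lt_ite_comm]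

lemma BWR_row_self (n : ℕ) (r s : ℂ) (a : Fin n) :
    (BWR n r s).row (a, a) = Pi.single (a, a) 1 := by
  simp [BWR_row]

lemma BWR_row_of_lt (n : ℕ) (r s : ℂ) {a b : Fin n} (h : a < b) :
    (BWR n r s).row (a, b) = s⁻¹ • Pi.single (b, a) 1 := by
  simp [BWR_row, h, h.ne', h.not_gt]

lemma BWR_row_of_gt (n : ℕ) (r s : ℂ) {a b : Fin n} (h : b < a) :
    (BWR n r s).row (a, b) = r • Pi.single (b, a) 1 + (1 - r * s⁻¹) • Pi.single (a, b) 1 := by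
  simp [BWR_row, h, h.ne, h.not_gt]

section Rows

variable {ι α : Type*} [DecidableEq ι] (M : Matrix ι ι α) (i : ι)

lemma Matrix.row_sub_one [Ring α] : (M - 1).row i = M.row i - Pi.single i 1 :=
  funext fun _ => congrArg (M i _ - ·) one_eq_pi_single

lemma Matrix.row_add_smul_one [NonAssocSemiring α] (c : α) :
    (M + c • 1).row i = M.row i + c • Pi.single i 1 :=
  funext fun _ => congrArg (M i _ + c * ·) one_eq_pi_single

end Rows

theorem stmt0_general (n : ℕ) (r s : ℂ) :
    (BWR n r s - 1) * (BWR n r s + (r * s⁻¹) • (1 : Matrix (Fin n × Fin n) (Fin n × Fin n) ℂ)) = 0 := by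
  refine Matrix.ext_row fun ⟨a, b⟩ => ?_
  change (BWR n r s - 1).row (a, b) ᵥ* _ = 0
  rw [Matrix.row_sub_one]
  rcases lt_trichotomy a b with h | rfl | h
  · simp only [BWR_row_of_lt n r s h, sub_vecMul, smul_vecMul, single_vecMul,
      Matrix.row_add_smul_one, BWR_row_of_gt n r s h]
    module
  · rw [BWR_row_self, sub_self, zero_vecMul]
  · simp only [BWR_row_of_gt n r s h, add_vecMul, sub_vecMul, smul_vecMul, single_vecMul,
      Matrix.row_add_smul_one, BWR_row_of_lt n r s h]
    module

/-- The Benkart–Witherspoon R-matrix satisfies `(R − I)(R + r s⁻¹ I) = 0`,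
equivalently `R² = (1 − r s⁻¹) R + r s⁻¹ I`. -/
theorem stmt0 (n : ℕ) (hn : 2 ≤ n) (r s : ℂ) (hr : r ≠ 0) (hs : s ≠ 0) (hrs : r ≠ s) :
    (BWR n r s - 1) * (BWR n r s + (r * s⁻¹) • (1 : Matrix (Fin n × Fin n) (Fin n × Fin n) ℂ)) = 0 :=
  stmt0_general n r s
end

section
/- The Benkart–Witherspoon R-matrix R is invertible, and its inverse is given by R⁻¹ = r⁻¹ s R + (1 − r⁻¹ s) I, i.e. R · (r⁻¹ s R + (1 − r⁻¹ s) I) = I. -/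
open Matrix Kronecker BigOperators

/-!
`R` fixes every `v_k ⊗ v_k` and, for `k < l`, preserves the plane spanned by `v_k ⊗ v_l` and
`v_l ⊗ v_k`, acting there by `[[0, s⁻¹], [r, 1 - q]]` with `q = r s⁻¹`. This block has trace
`1 - q` and determinant `-q`, so by Cayley–Hamilton `R` satisfies the Hecke-type relation
`R² = (1 - q) R + q`. For `q ≠ 0` this relation exhibits `q⁻¹ R + (1 - q⁻¹)` as an inverse of `R`.
-/

theorem Matrix.single_one_mulVec_single {m n α : Type*} [Fintype n] [DecidableEq m]
    [DecidableEq n] [NonAssocSemiring α] (i : m) (j j' : n) :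
    single i j (1 : α) *ᵥ Pi.single j' 1 = if j = j' then Pi.single i 1 else 0 := by
  rw [single_mulVec]
  split_ifs with h
  · simp [h, Pi.single]
  · simp [Ne.symm h]

section UpperTriangleSums

variable {n : ℕ} {M : Type*} [AddCommMonoid M] (g : Fin n → Fin n → M) (k l : Fin n)

theorem Fin.sum_sum_ite_lt_ite_eq :
    (∑ i, ∑ j, if i < j then if (i, j) = (k, l) then g i j else 0 else 0) =
      if k < l then g k l else 0 := by
  rw [Finset.sum_eq_single k, Finset.sum_eq_single l] <;> simp +contextual

theorem Fin.sum_sum_ite_lt_ite_swap_eq :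
    (∑ i, ∑ j, if i < j then if (j, i) = (k, l) then g i j else 0 else 0) =
      if l < k then g l k else 0 := by
  rw [Finset.sum_eq_single l, Finset.sum_eq_single k] <;> simp +contextual [eq_comm]

end UpperTriangleSums

theorem mul_smul_add_smul_one_eq_one {K A : Type*} [Field K] [Ring A] [Algebra K A] {q : K}
    (hq : q ≠ 0) {x : A} (hx : x * x = (1 - q) • x + q • 1) :
    x * (q⁻¹ • x + (1 - q⁻¹) • 1) = 1 := by
  rw [mul_add, mul_smul_comm, mul_smul_comm, hx, mul_one, smul_add, smul_smul, smul_smul,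
    mul_sub, mul_one, inv_mul_cancel₀ hq]
  module

theorem E_kronecker_E (n : ℕ) (a b c d : Fin n) :
    E n a b ⊗ₖ E n c d = single (a, c) (b, d) 1 := by
  rw [E, E, single_kronecker_single, one_mul]

section BWR

variable (n : ℕ) (r s : ℂ) {k l : Fin n}

theorem BWR_mulVec_single (k l : Fin n) :
    BWR n r s *ᵥ Pi.single (k, l) 1 =
      (if k = l then Pi.single (k, k) 1 else 0) + r • (if k < l then Pi.single (l, k) 1 else 0) +
        s⁻¹ • (if l < k then Pi.single (l, k) 1 else 0) +
        (1 - r * s⁻¹) • (if l < k then Pi.single (k, l) 1 else 0) := by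
  simp only [BWR, E_kronecker_E, add_mulVec, sum_mulVec, smul_mulVec, zero_mulVec,
    apply_ite (· *ᵥ Pi.single (k, l) (1 : ℂ)), single_one_mulVec_single,
    Fin.sum_sum_ite_lt_ite_eq, Fin.sum_sum_ite_lt_ite_swap_eq]
  simp only [Prod.mk.injEq, ite_and, Finset.sum_ite_eq', Finset.mem_univ, if_true]

theorem BWR_mulVec_single_self (k : Fin n) :
    BWR n r s *ᵥ Pi.single (k, k) 1 = Pi.single (k, k) 1 := by
  rw [BWR_mulVec_single]
  simp

theorem BWR_mulVec_single_of_lt (h : k < l) :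
    BWR n r s *ᵥ Pi.single (k, l) 1 = r • Pi.single (l, k) 1 := by
  rw [BWR_mulVec_single]
  simp [h, h.ne, not_lt_of_gt h]

theorem BWR_mulVec_single_of_gt (h : l < k) :
    BWR n r s *ᵥ Pi.single (k, l) 1 =
      s⁻¹ • Pi.single (l, k) 1 + (1 - r * s⁻¹) • Pi.single (k, l) 1 := by
  rw [BWR_mulVec_single]
  simp [h, h.ne', not_lt_of_gt h]

theorem BWR_mul_self :
    BWR n r s * BWR n r s = (1 - r * s⁻¹) • BWR n r s + (r * s⁻¹) • 1 := by
  refine ext_of_mulVec_single fun ⟨k, l⟩ => ?_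
  rw [← mulVec_mulVec, add_mulVec, smul_mulVec, smul_mulVec, one_mulVec]
  rcases lt_trichotomy k l with h | rfl | h
  · simp only [BWR_mulVec_single_of_lt _ _ _ h, mulVec_smul, BWR_mulVec_single_of_gt _ _ _ h]
    module
  · simp only [BWR_mulVec_single_self]
    module
  · simp only [BWR_mulVec_single_of_gt _ _ _ h, mulVec_add, mulVec_smul,
      BWR_mulVec_single_of_lt _ _ _ h]
    module

end BWR

theorem stmt2_general (n : ℕ) (r s : ℂ) (hr : r ≠ 0) (hs : s ≠ 0) :
    IsUnit (BWR n r s) ∧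
    BWR n r s * ((r⁻¹ * s) • BWR n r s
      + (1 - r⁻¹ * s) • (1 : Matrix (Fin n × Fin n) (Fin n × Fin n) ℂ)) = 1 := by
  have hinv := mul_smul_add_smul_one_eq_one (mul_ne_zero hr (inv_ne_zero hs)) (BWR_mul_self n r s)
  rw [mul_inv, inv_inv] at hinv
  exact ⟨.of_mul_eq_one _ hinv, hinv⟩

/-- The Benkart–Witherspoon R-matrix is invertible, with inverse
`R⁻¹ = r⁻¹ s R + (1 − r⁻¹ s) I`. -/
theorem stmt2 (n : ℕ) (hn : 2 ≤ n) (r s : ℂ) (hr : r ≠ 0) (hs : s ≠ 0) (hrs : r ≠ s) :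
    IsUnit (BWR n r s) ∧
    BWR n r s * ((r⁻¹ * s) • BWR n r s
      + (1 - r⁻¹ * s) • (1 : Matrix (Fin n × Fin n) (Fin n × Fin n) ℂ)) = 1 :=
  stmt2_general n r s hr hs
end

section
/- If in addition s ≠ −r, then V ⊗ V decomposes as the internal direct sum of the subspaces S²_{r,s}(V) and Λ²_{r,s}(V); that is, these two subspaces are complementary: their intersection is zero and their sum is all of V ⊗ V. -/
open Matrix Kronecker BigOperators

/-- The `(r,s)`-symmetric square `S²_{r,s}(V) ⊆ V ⊗ V`, with `V ⊗ V` modelled as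
`Fin n × Fin n → ℂ` and `v_i ⊗ v_j = Pi.single (i, j) 1`. -/
noncomputable def Ssub (n : ℕ) (s : ℂ) : Submodule ℂ (Fin n × Fin n → ℂ) :=
  Submodule.span ℂ ({ f | ∃ i : Fin n, f = (Pi.single (i, i) 1 : Fin n × Fin n → ℂ) } ∪
    { f | ∃ i j : Fin n, i < j ∧
      f = (Pi.single (i, j) 1 : Fin n × Fin n → ℂ) + s • (Pi.single (j, i) 1 : Fin n × Fin n → ℂ) })

/-- The `(r,s)`-antisymmetric square `Λ²_{r,s}(V) ⊆ V ⊗ V`. -/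
noncomputable def Lsub (n : ℕ) (r : ℂ) : Submodule ℂ (Fin n × Fin n → ℂ) :=
  Submodule.span ℂ { f | ∃ i j : Fin n, i < j ∧
    f = (Pi.single (i, j) 1 : Fin n × Fin n → ℂ) - r • (Pi.single (j, i) 1 : Fin n × Fin n → ℂ) }

/-!
Each generator of `S²_{r,s}(V)` satisfies `f (j, i) = s * f (i, j)` for `i < j`, and each
generator of `Λ²_{r,s}(V)` satisfies `f (j, i) = -r * f (i, j)` and vanishes on the diagonal.
When `s ≠ -r` these linear relations have only the trivial common solution. Conversely, for
`i < j` the difference of the generators `v_i ⊗ v_j + s v_j ⊗ v_i` and `v_i ⊗ v_j - r v_j ⊗ v_i`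
is `(s + r) v_j ⊗ v_i`, so every standard basis vector lies in the sum.
-/

section

variable {ι R : Type*} [LinearOrder ι] [CommRing R]

def twistedSymmetric (c : R) : Submodule R (ι × ι → R) where
  carrier := {f | ∀ i j, i < j → f (j, i) = c * f (i, j)}
  add_mem' hf hg i j h := by simp [hf i j h, hg i j h, mul_add]
  zero_mem' := by simp
  smul_mem' a f hf i j h := by simp [hf i j h, mul_left_comm]

def vanishingOnDiag : Submodule R (ι × ι → R) where
  carrier := {f | ∀ i, f (i, i) = 0}
  add_mem' hf hg i := by simp [hf i, hg i]
  zero_mem' := by simp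
  smul_mem' a f hf i := by simp [hf i]

lemma single_diag_mem_twistedSymmetric (c : R) (k : ι) :
    (Pi.single (k, k) 1 : ι × ι → R) ∈ twistedSymmetric c := by
  intro i j hij
  simp only [Pi.single_apply, Prod.mk.injEq]
  split_ifs <;> grind

lemma single_add_smul_single_mem_twistedSymmetric (c : R) {k l : ι} (hkl : k < l) :
    (Pi.single (k, l) 1 + c • Pi.single (l, k) 1 : ι × ι → R) ∈ twistedSymmetric c := by
  intro i j hij
  simp only [Pi.add_apply, Pi.smul_apply, Pi.single_apply, Prod.mk.injEq, smul_eq_mul]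
  split_ifs <;> grind

lemma single_add_smul_single_mem_vanishingOnDiag (c : R) {k l : ι} (hkl : k ≠ l) :
    (Pi.single (k, l) 1 + c • Pi.single (l, k) 1 : ι × ι → R) ∈ vanishingOnDiag := by
  intro i
  simp only [Pi.add_apply, Pi.smul_apply, Pi.single_apply, Prod.mk.injEq, smul_eq_mul]
  split_ifs <;> grind

lemma twistedSymmetric_inf_twistedSymmetric_inf_vanishingOnDiag [IsDomain R] {a b : R}
    (hab : a ≠ b) :
    twistedSymmetric a ⊓ twistedSymmetric b ⊓ (vanishingOnDiag : Submodule R (ι × ι → R)) =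
      ⊥ := by
  rw [eq_bot_iff]
  rintro f ⟨⟨ha, hb⟩, hdiag⟩
  have upper : ∀ i j, i < j → f (i, j) = 0 := fun i j hij => by
    have : (a - b) * f (i, j) = 0 := by rw [sub_mul, ← ha i j hij, ← hb i j hij, sub_self]
    exact (mul_eq_zero.mp this).resolve_left (sub_ne_zero.mpr hab)
  ext ⟨i, j⟩
  rcases lt_trichotomy i j with hij | rfl | hij
  · exact upper i j hij
  · exact hdiag i
  · simp [ha j i hij, upper j i hij]

end

lemma Ssub_le_twistedSymmetric (n : ℕ) (s : ℂ) : Ssub n s ≤ twistedSymmetric s := by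
  rw [Ssub, Submodule.span_le]
  rintro f (⟨k, rfl⟩ | ⟨k, l, hkl, rfl⟩)
  · exact single_diag_mem_twistedSymmetric s k
  · exact single_add_smul_single_mem_twistedSymmetric s hkl

lemma Lsub_le_twistedSymmetric_inf_vanishingOnDiag (n : ℕ) (r : ℂ) :
    Lsub n r ≤ twistedSymmetric (-r) ⊓ vanishingOnDiag := by
  rw [Lsub, Submodule.span_le]
  rintro f ⟨k, l, hkl, rfl⟩
  rw [sub_eq_add_neg, ← neg_smul]
  exact ⟨single_add_smul_single_mem_twistedSymmetric (-r) hkl,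
    single_add_smul_single_mem_vanishingOnDiag (-r) hkl.ne⟩

lemma Ssub_inf_Lsub_eq_bot (n : ℕ) {r s : ℂ} (hsr : s ≠ -r) : Ssub n s ⊓ Lsub n r = ⊥ := by
  rw [eq_bot_iff, ← twistedSymmetric_inf_twistedSymmetric_inf_vanishingOnDiag hsr, inf_assoc]
  exact inf_le_inf (Ssub_le_twistedSymmetric n s)
    (Lsub_le_twistedSymmetric_inf_vanishingOnDiag n r)

lemma single_mem_Ssub_sup_Lsub (n : ℕ) {r s : ℂ} (hsr : s ≠ -r) (p : Fin n × Fin n) :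
    (Pi.single p 1 : Fin n × Fin n → ℂ) ∈ Ssub n s ⊔ Lsub n r := by
  have mem_S : ∀ k l : Fin n, k < l →
      Pi.single (k, l) 1 + s • Pi.single (l, k) 1 ∈ Ssub n s ⊔ Lsub n r := fun k l hkl =>
    Submodule.mem_sup_left (Submodule.subset_span (Or.inr ⟨k, l, hkl, rfl⟩))
  have lower : ∀ k l : Fin n, k < l →
      (Pi.single (l, k) 1 : Fin n × Fin n → ℂ) ∈ Ssub n s ⊔ Lsub n r := by
    intro k l hkl
    have mem_L : Pi.single (k, l) 1 - r • Pi.single (l, k) 1 ∈ Ssub n s ⊔ Lsub n r :=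
      Submodule.mem_sup_right (Submodule.subset_span ⟨k, l, hkl, rfl⟩)
    have hsr' : s + r ≠ 0 := fun h => hsr (eq_neg_of_add_eq_zero_left h)
    have := Submodule.smul_mem _ (s + r)⁻¹ (Submodule.sub_mem _ (mem_S k l hkl) mem_L)
    rwa [add_sub_sub_cancel, ← add_smul, smul_smul, inv_mul_cancel₀ hsr', one_smul] at this
  obtain ⟨i, j⟩ := p
  rcases lt_trichotomy i j with hij | rfl | hij
  · simpa using Submodule.sub_mem _ (mem_S i j hij) (Submodule.smul_mem _ s (lower i j hij))
  · exact Submodule.mem_sup_left (Submodule.subset_span (Or.inl ⟨i, rfl⟩))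
  · exact lower j i hij

theorem stmt4_general (n : ℕ) (r s : ℂ) (hsr : s ≠ -r) :
    Ssub n s ⊓ Lsub n r = ⊥ ∧ Ssub n s ⊔ Lsub n r = ⊤ := by
  refine ⟨Ssub_inf_Lsub_eq_bot n hsr, eq_top_iff.mpr ?_⟩
  rw [← (Pi.basisFun ℂ (Fin n × Fin n)).span_eq, Submodule.span_le]
  rintro _ ⟨p, rfl⟩
  rw [Pi.basisFun_apply]
  exact single_mem_Ssub_sup_Lsub n hsr p

/-- If `s ≠ -r`, then `V ⊗ V = S²_{r,s}(V) ⊕ Λ²_{r,s}(V)` as an internal direct sum. -/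
theorem stmt4 (n : ℕ) (hn : 2 ≤ n) (r s : ℂ) (hr : r ≠ 0) (hs : s ≠ 0) (hrs : r ≠ s) (hsr : s ≠ -r) :
    Ssub n s ⊓ Lsub n r = ⊥ ∧ Ssub n s ⊔ Lsub n r = ⊤ :=
  stmt4_general n r s hsr
end

section
/- Every vector w in the subspace Λ²_{r,s}(V) is an eigenvector of the Benkart–Witherspoon R-matrix with eigenvalue −r s⁻¹: R w = −r s⁻¹ w. -/
open Matrix Kronecker BigOperators

/-!
On the standard basis `R` is monomial up to one triangular term: for `i < j` it sends
`v_i ⊗ v_j` to `r v_j ⊗ v_i` and `v_j ⊗ v_i` to `s⁻¹ v_i ⊗ v_j + (1 - r s⁻¹) v_j ⊗ v_i`.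
Hence `R (v_i ⊗ v_j - r v_j ⊗ v_i) = -r s⁻¹ (v_i ⊗ v_j - r v_j ⊗ v_i)`, and the spanning
vectors of `Λ²_{r,s}(V)` lie in the `-r s⁻¹`-eigenspace, a subspace.
-/

lemma E_kronecker_E_s8 (n : ℕ) (p q p' q' : Fin n) :
    E n p q ⊗ₖ E n p' q' = single (p, p') (q, q') 1 := by
  rw [E, E, single_kronecker_single, mul_one]

lemma Fintype.sum_sum_eq_of_ne_zero {α β M : Type*} [Fintype α] [Fintype β] [AddCommMonoid M]
    (F : α → β → M) (a : α) (b : β) (h : ∀ i j, F i j ≠ 0 → i = a ∧ j = b) :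
    ∑ i, ∑ j, F i j = F a b := by
  rw [← Fintype.sum_prod_type', Fintype.sum_eq_single (a, b)]
  rintro ⟨i, j⟩ hij
  by_contra hF
  exact hij (Prod.ext_iff.mpr (h i j hF))

lemma BWR_apply (n : ℕ) (r s : ℂ) (a b c d : Fin n) :
    BWR n r s (a, b) (c, d) =
      (if a = b ∧ c = a ∧ d = a then 1 else 0)
      + (if c < d ∧ a = d ∧ b = c then r else 0)
      + (if d < c ∧ a = d ∧ b = c then s⁻¹ else 0)
      + (if b < a ∧ c = a ∧ d = b then 1 - r * s⁻¹ else 0) := by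
  simp only [BWR, E_kronecker_E_s8, Matrix.add_apply, Matrix.smul_apply, Matrix.sum_apply,
    single_apply, Prod.mk.injEq, apply_ite (fun M : Matrix _ _ ℂ => M (a, b) (c, d)),
    Matrix.zero_apply, smul_eq_mul]
  rw [Fintype.sum_eq_single a, Fintype.sum_sum_eq_of_ne_zero _ c d,
    Fintype.sum_sum_eq_of_ne_zero _ d c, Fintype.sum_sum_eq_of_ne_zero _ d c]
  · split_ifs <;> grind
  all_goals intros; grind

lemma BWR_mulVec_single_lt (n : ℕ) (r s : ℂ) {i j : Fin n} (hij : i < j) :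
    BWR n r s *ᵥ Pi.single (i, j) 1 = r • Pi.single (j, i) 1 := by
  ext ⟨a, b⟩
  simp only [mulVec_single_one, col_apply, BWR_apply, Pi.smul_apply, Pi.single_apply,
    Prod.mk.injEq, smul_eq_mul]
  split_ifs <;> grind

lemma BWR_mulVec_single_gt (n : ℕ) (r s : ℂ) {i j : Fin n} (hij : i < j) :
    BWR n r s *ᵥ Pi.single (j, i) 1 =
      s⁻¹ • Pi.single (i, j) 1 + (1 - r * s⁻¹) • Pi.single (j, i) 1 := by
  ext ⟨a, b⟩
  simp only [mulVec_single_one, col_apply, BWR_apply, Pi.add_apply, Pi.smul_apply,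
    Pi.single_apply, Prod.mk.injEq, smul_eq_mul]
  split_ifs <;> grind

lemma BWR_mulVec_wedge (n : ℕ) (r s : ℂ) {i j : Fin n} (hij : i < j) :
    BWR n r s *ᵥ (Pi.single (i, j) 1 - r • Pi.single (j, i) 1) =
      (-(r * s⁻¹)) • (Pi.single (i, j) 1 - r • Pi.single (j, i) 1) := by
  rw [mulVec_sub, mulVec_smul, BWR_mulVec_single_lt n r s hij, BWR_mulVec_single_gt n r s hij]
  module

lemma Lsub_le_eigenspace_BWR (n : ℕ) (r s : ℂ) :
    Lsub n r ≤ Module.End.eigenspace (toLin' (BWR n r s)) (-(r * s⁻¹)) := by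
  refine Submodule.span_le.mpr ?_
  rintro _ ⟨i, j, hij, rfl⟩
  exact Module.End.mem_eigenspace_iff.mpr (BWR_mulVec_wedge n r s hij)

theorem stmt8_general (n : ℕ) (r s : ℂ) :
    ∀ w ∈ Lsub n r, (BWR n r s).mulVec w = (-(r * s⁻¹)) • w :=
  fun _ hw => Module.End.mem_eigenspace_iff.mp (Lsub_le_eigenspace_BWR n r s hw)

/-- Every vector of `Λ²_{r,s}(V)` is an eigenvector of the Benkart–Witherspoon
R-matrix with eigenvalue `−r s⁻¹`. -/
theorem stmt8 (n : ℕ) (hn : 2 ≤ n) (r s : ℂ) (hr : r ≠ 0) (hs : s ≠ 0) (hrs : r ≠ s) :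
    ∀ w ∈ Lsub n r, (BWR n r s).mulVec w = (-(r * s⁻¹)) • w :=
  stmt8_general n r s
end

section
/- The spectral-parameter R-matrix R(z) satisfies the Yang–Baxter equation with multiplicative spectral parameter: for all z, w ∈ ℂ, writing R₁(z) = R(z) ⊗ I_n and R₂(z) = I_n ⊗ R(z) as n³ × n³ matrices, one has R₁(z) R₂(zw) R₁(w) = R₂(w) R₁(zw) R₂(z). -/
open Matrix Kronecker BigOperators

/-- The spectral-parameter R-matrix `R(z)`. -/
noncomputable def Rz (n : ℕ) (r s z : ℂ) : Matrix (Fin n × Fin n) (Fin n × Fin n) ℂ :=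
  (1 - z * (r * s⁻¹)) • (∑ i : Fin n, E n i i ⊗ₖ E n i i)
  + (1 - z) • (r • (∑ i : Fin n, ∑ j : Fin n, if j < i then E n i j ⊗ₖ E n j i else 0)
      + s⁻¹ • (∑ i : Fin n, ∑ j : Fin n, if i < j then E n i j ⊗ₖ E n j i else 0))
  + (z * (1 - r * s⁻¹)) • (∑ i : Fin n, ∑ j : Fin n, if i < j then E n i i ⊗ₖ E n j j else 0)
  + (1 - r * s⁻¹) • (∑ i : Fin n, ∑ j : Fin n, if j < i then E n i i ⊗ₖ E n j j else 0)

/-- `I_n ⊗ M` reindexed so that it acts on `(V ⊗ V) ⊗ V`. -/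
noncomputable def R2of (n : ℕ) (M : Matrix (Fin n × Fin n) (Fin n × Fin n) ℂ) :
    Matrix ((Fin n × Fin n) × Fin n) ((Fin n × Fin n) × Fin n) ℂ :=
  Matrix.reindex (Equiv.prodAssoc (Fin n) (Fin n) (Fin n)).symm
    (Equiv.prodAssoc (Fin n) (Fin n) (Fin n)).symm ((1 : Matrix (Fin n) (Fin n) ℂ) ⊗ₖ M)

/-!
`R(z)` sends `eᵢ ⊗ eⱼ` to a combination of `eᵢ ⊗ eⱼ` and `eⱼ ⊗ eᵢ` whose two coefficients
depend only on the relative order of `i` and `j`. Hence the row of either side of the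
Yang–Baxter equation at `e_a ⊗ e_b ⊗ e_c` is a combination of the rows of the identity at the
permutations of `(a, b, c)`, with coefficients determined by the relative order of `a, b, c`.
In each of the thirteen weak orderings of `a, b, c` the equation is then a polynomial identity
in `r`, `s⁻¹`, `z`, `w`.
-/

theorem sum_sum_ite_single_apply {ι α : Type*} [Fintype ι] [DecidableEq ι] [AddCommMonoid α]
    (p : ι → ι → Prop) [DecidableRel p] (σ : ι → ι → ι × ι) (c : α) (x y : ι × ι) :
    (∑ a, ∑ b, if p a b then single (a, b) (σ a b) c else 0) x y =
      if p x.1 x.2 ∧ σ x.1 x.2 = y then c else 0 := by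
  rw [← Fintype.sum_prod_type' (f := fun a b => if p a b then single (a, b) (σ a b) c else 0),
    Matrix.sum_apply, Fintype.sum_eq_single x]
  · simp [apply_ite (fun M : Matrix (ι × ι) (ι × ι) α => M x y), single_apply, ite_and]
  · intro x' hx'
    simp [apply_ite (fun M : Matrix (ι × ι) (ι × ι) α => M x y), hx']

noncomputable def diagCoeff (r s z : ℂ) {n : ℕ} (i j : Fin n) : ℂ :=
  if i = j then 1 - z * (r * s⁻¹) else if i < j then z * (1 - r * s⁻¹) else 1 - r * s⁻¹

noncomputable def swapCoeff (r s z : ℂ) {n : ℕ} (i j : Fin n) : ℂ :=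
  if i = j then 0 else if i < j then (1 - z) * s⁻¹ else (1 - z) * r

theorem Rz_apply (n : ℕ) (r s z : ℂ) (i j k l : Fin n) :
    Rz n r s z (i, j) (k, l) =
      (if k = i ∧ l = j then diagCoeff r s z i j else 0)
      + (if k = j ∧ l = i then swapCoeff r s z i j else 0) := by
  simp only [Rz, E, single_kronecker_single, mul_one, Matrix.add_apply, Matrix.smul_apply,
    sum_sum_ite_single_apply]
  simp only [Matrix.sum_apply, single_apply, Prod.mk.injEq, ite_and, Finset.sum_ite_eq',
    Finset.mem_univ, if_true, smul_eq_mul, diagCoeff, swapCoeff]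
  rcases lt_trichotomy i j with h | rfl | h
  · simp [h, h.ne, h.not_gt, eq_comm, add_comm]
  · simp [eq_comm]
  · simp [h, h.ne', h.not_gt, eq_comm, add_comm]

theorem sum_Rz_apply_mul (n : ℕ) (r s z : ℂ) (i j : Fin n) (F : Fin n × Fin n → ℂ) :
    ∑ p, Rz n r s z (i, j) p * F p =
      diagCoeff r s z i j * F (i, j) + swapCoeff r s z i j * F (j, i) := by
  simp [Fintype.sum_prod_type, Rz_apply, add_mul, Finset.sum_add_distrib, ite_and]

theorem kronecker_one_mul_apply {l m n o α : Type*} [Fintype m] [Fintype n] [DecidableEq n]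
    [NonAssocSemiring α] (M : Matrix l m α) (N : Matrix (m × n) o α) (i : l) (k : n) (y : o) :
    ((M ⊗ₖ (1 : Matrix n n α)) * N) (i, k) y = ∑ j, M i j * N (j, k) y := by
  simp [Matrix.mul_apply, Fintype.sum_prod_type, one_apply]

theorem R2of_mul_apply {n : ℕ} {o : Type*} (M : Matrix (Fin n × Fin n) (Fin n × Fin n) ℂ)
    (N : Matrix ((Fin n × Fin n) × Fin n) o ℂ) (a b c : Fin n) (y : o) :
    (R2of n M * N) ((a, b), c) y = ∑ p, M (b, c) p * N ((a, p.1), p.2) y := by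
  simp [R2of, Matrix.mul_apply, Fintype.sum_prod_type, one_apply]

theorem Rz_kronecker_one_mul_apply {n : ℕ} {o : Type*} (r s z : ℂ)
    (N : Matrix ((Fin n × Fin n) × Fin n) o ℂ) (a b c : Fin n) (y : o) :
    ((Rz n r s z ⊗ₖ (1 : Matrix (Fin n) (Fin n) ℂ)) * N) ((a, b), c) y =
      diagCoeff r s z a b * N ((a, b), c) y + swapCoeff r s z a b * N ((b, a), c) y := by
  rw [kronecker_one_mul_apply, sum_Rz_apply_mul]

theorem R2of_Rz_mul_apply {n : ℕ} {o : Type*} (r s z : ℂ)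
    (N : Matrix ((Fin n × Fin n) × Fin n) o ℂ) (a b c : Fin n) (y : o) :
    (R2of n (Rz n r s z) * N) ((a, b), c) y =
      diagCoeff r s z b c * N ((a, b), c) y + swapCoeff r s z b c * N ((a, c), b) y := by
  rw [R2of_mul_apply, sum_Rz_apply_mul (F := fun p => N ((a, p.1), p.2) y)]

theorem stmt10_general (n : ℕ) (r s : ℂ) : ∀ z w : ℂ,
    (Rz n r s z ⊗ₖ (1 : Matrix (Fin n) (Fin n) ℂ)) * R2of n (Rz n r s (z * w)) *
      (Rz n r s w ⊗ₖ (1 : Matrix (Fin n) (Fin n) ℂ))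
    = R2of n (Rz n r s w) * (Rz n r s (z * w) ⊗ₖ (1 : Matrix (Fin n) (Fin n) ℂ)) *
      R2of n (Rz n r s z) := by
  intro z w
  ext ⟨⟨a, b⟩, c⟩ y
  rw [← Matrix.mul_one (Rz n r s w ⊗ₖ _), ← Matrix.mul_one (R2of n (Rz n r s z))]
  simp only [Matrix.mul_assoc, Rz_kronecker_one_mul_apply, R2of_Rz_mul_apply]
  rcases lt_trichotomy a b with hab | hab | hab <;>
  rcases lt_trichotomy b c with hbc | hbc | hbc <;>
  rcases lt_trichotomy a c with hac | hac | hac <;>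
  first
  | (exfalso; omega)
  | (simp (disch := omega) only [diagCoeff, swapCoeff, if_pos, if_neg]; subst_vars; ring)

/-- `R(z)` satisfies the Yang–Baxter equation with multiplicative spectral parameter:
`R₁(z) R₂(zw) R₁(w) = R₂(w) R₁(zw) R₂(z)`. -/
theorem stmt10 (n : ℕ) (hn : 2 ≤ n) (r s : ℂ) (hr : r ≠ 0) (hs : s ≠ 0) (hrs : r ≠ s) : ∀ z w : ℂ,
    (Rz n r s z ⊗ₖ (1 : Matrix (Fin n) (Fin n) ℂ)) * R2of n (Rz n r s (z * w)) *
      (Rz n r s w ⊗ₖ (1 : Matrix (Fin n) (Fin n) ℂ))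
    = R2of n (Rz n r s w) * (Rz n r s (z * w) ⊗ₖ (1 : Matrix (Fin n) (Fin n) ℂ)) *
      R2of n (Rz n r s z) :=
  stmt10_general n r s
end

section
/- The image of the linear map R(r s⁻¹) on V ⊗ V equals the subspace S²_{r,s}(V). -/
/-!
The image of a matrix is the span of its columns. At `z = r s⁻¹` the column of `R(z)` indexed by
`(k, k)` is `(1 - r² s⁻²) v_k ⊗ v_k`, and for `k < l` the columns indexed by `(k, l)` and `(l, k)`
are `r s⁻¹ (1 - r s⁻¹)` and `(1 - r s⁻¹) s⁻¹` times `v_k ⊗ v_l + s v_l ⊗ v_k`. Since `r, s ≠ 0` and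
`r ≠ ±s` these scalars are nonzero, so the columns and the spanning vectors of `S²_{r,s}(V)` agree
up to nonzero scalars.
-/

open Matrix Kronecker BigOperators

theorem Submodule.span_range_eq_span_of_forall_smul {R M ι : Type*} [Semiring R]
    [AddCommMonoid M] [Module R M] {f : ι → M} {S : Set M}
    (hf : ∀ i, ∃ c : R, ∃ x ∈ S, f i = c • x) (hS : ∀ x ∈ S, ∃ c : R, ∃ i, x = c • f i) :
    span R (Set.range f) = span R S := by
  apply le_antisymm <;> rw [span_le]
  · rintro _ ⟨i, rfl⟩
    obtain ⟨c, x, hx, hfx⟩ := hf i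
    exact hfx ▸ smul_mem _ c (subset_span hx)
  · intro x hx
    obtain ⟨c, i, rfl⟩ := hS x hx
    exact smul_mem _ c (subset_span ⟨i, rfl⟩)

section columns

variable {n : ℕ}

local notation "v[" a ", " b "]" => (Pi.single (a, b) (1 : ℂ) : Fin n × Fin n → ℂ)

lemma E_kronecker_E_mulVec_single (i j k l a b : Fin n) :
    (E n i j ⊗ₖ E n k l) *ᵥ v[a, b] = if j = a ∧ l = b then v[i, k] else 0 := by
  rw [E, E, single_kronecker_single, mul_one, single_mulVec, ← Pi.single]
  split_ifs with h <;> simp [h]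

lemma col_sum_E_kronecker_E_self (a b : Fin n) :
    (∑ i : Fin n, E n i i ⊗ₖ E n i i).col (a, b) = if a = b then v[a, a] else 0 := by
  rw [← mulVec_single_one, sum_mulVec]
  simp only [E_kronecker_E_mulVec_single]
  simp [ite_and]

lemma col_sum_E_kronecker_E_swap (p : Fin n → Fin n → Prop) [DecidableRel p] (a b : Fin n) :
    (∑ i : Fin n, ∑ j : Fin n, if p i j then E n i j ⊗ₖ E n j i else 0).col (a, b) =
      if p b a then v[b, a] else 0 := by
  rw [← mulVec_single_one]
  simp only [sum_mulVec, apply_ite (· *ᵥ v[a, b]), zero_mulVec,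
    E_kronecker_E_mulVec_single]
  rw [Finset.sum_eq_single b, Finset.sum_eq_single a] <;> aesop

lemma col_sum_E_kronecker_E_diag (p : Fin n → Fin n → Prop) [DecidableRel p] (a b : Fin n) :
    (∑ i : Fin n, ∑ j : Fin n, if p i j then E n i i ⊗ₖ E n j j else 0).col (a, b) =
      if p a b then v[a, b] else 0 := by
  rw [← mulVec_single_one]
  simp only [sum_mulVec, apply_ite (· *ᵥ v[a, b]), zero_mulVec,
    E_kronecker_E_mulVec_single]
  rw [Finset.sum_eq_single a, Finset.sum_eq_single b] <;> aesop

lemma col_Rz (r s z : ℂ) (k l : Fin n) :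
    (Rz n r s z).col (k, l) =
      (1 - z * (r * s⁻¹)) • (if k = l then v[k, k] else 0)
      + (1 - z) • (r • (if k < l then v[l, k] else 0) + s⁻¹ • (if l < k then v[l, k] else 0))
      + (z * (1 - r * s⁻¹)) • (if k < l then v[k, l] else 0)
      + (1 - r * s⁻¹) • (if l < k then v[k, l] else 0) := by
  simp only [Rz, ← mulVec_single_one, add_mulVec, smul_mulVec]
  simp only [mulVec_single_one, col_sum_E_kronecker_E_self, col_sum_E_kronecker_E_swap,
    col_sum_E_kronecker_E_diag]

lemma col_Rz_self (r s : ℂ) (k : Fin n) :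
    (Rz n r s (r * s⁻¹)).col (k, k) = (1 - r * s⁻¹ * (r * s⁻¹)) • v[k, k] := by
  simp [col_Rz]

lemma col_Rz_of_lt {s : ℂ} (r : ℂ) (hs : s ≠ 0) {k l : Fin n} (h : k < l) :
    (Rz n r s (r * s⁻¹)).col (k, l) = (r * s⁻¹ * (1 - r * s⁻¹)) • (v[k, l] + s • v[l, k]) := by
  simp only [col_Rz, h, h.ne, h.not_gt, if_true, if_false, smul_zero, add_zero, zero_add]
  match_scalars <;> field_simp

lemma col_Rz_of_gt {s : ℂ} (r : ℂ) (hs : s ≠ 0) {k l : Fin n} (h : l < k) :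
    (Rz n r s (r * s⁻¹)).col (k, l) = ((1 - r * s⁻¹) * s⁻¹) • (v[l, k] + s • v[k, l]) := by
  simp only [col_Rz, h, h.ne', h.not_gt, if_true, if_false, smul_zero, add_zero, zero_add]
  match_scalars <;> field_simp

end columns

theorem stmt13_general (n : ℕ) (r s : ℂ) (hr : r ≠ 0) (hs : s ≠ 0) (hrs : r ≠ s) (hsr : s ≠ -r) :
    LinearMap.range (Rz n r s (r * s⁻¹)).mulVecLin = Ssub n s := by
  have h_sub : 1 - r * s⁻¹ ≠ 0 := sub_ne_zero.2 fun h => hrs ((mul_inv_eq_one₀ hs).1 h.symm)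
  have h_add : 1 + r * s⁻¹ ≠ 0 := fun h => hsr (by field_simp at h; linear_combination h)
  have h_self : 1 - r * s⁻¹ * (r * s⁻¹) ≠ 0 := by
    rw [show 1 - r * s⁻¹ * (r * s⁻¹) = (1 - r * s⁻¹) * (1 + r * s⁻¹) by ring]
    exact mul_ne_zero h_sub h_add
  have h_lt : r * s⁻¹ * (1 - r * s⁻¹) ≠ 0 := by simp [hr, hs, h_sub]
  rw [range_mulVecLin, Ssub]
  refine Submodule.span_range_eq_span_of_forall_smul ?_ ?_
  · rintro ⟨k, l⟩
    rcases lt_trichotomy k l with h | rfl | h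
    · exact ⟨_, _, Or.inr ⟨k, l, h, rfl⟩, col_Rz_of_lt r hs h⟩
    · exact ⟨_, _, Or.inl ⟨k, rfl⟩, col_Rz_self r s k⟩
    · exact ⟨_, _, Or.inr ⟨l, k, h, rfl⟩, col_Rz_of_gt r hs h⟩
  · rintro _ (⟨i, rfl⟩ | ⟨i, j, h, rfl⟩)
    · exact ⟨_, (i, i), by rw [col_Rz_self, inv_smul_smul₀ h_self]⟩
    · exact ⟨_, (i, j), by rw [col_Rz_of_lt r hs h, inv_smul_smul₀ h_lt]⟩

/-- The image of `R(r s⁻¹)` on `V ⊗ V` equals `S²_{r,s}(V)`. -/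
theorem stmt13 (n : ℕ) (hn : 2 ≤ n) (r s : ℂ) (hr : r ≠ 0) (hs : s ≠ 0) (hrs : r ≠ s) (hsr : s ≠ -r) :
    LinearMap.range (Rz n r s (r * s⁻¹)).mulVecLin = Ssub n s :=
  stmt13_general n r s hr hs hrs hsr
end

section
/- The kernel of the linear map R(r s⁻¹) on V ⊗ V equals the subspace Λ²_{r,s}(V). -/
/-!
On each block spanned by `v_i ⊗ v_j` and `v_j ⊗ v_i` (`i < j`) the matrix `R(z)` acts by a
`2 × 2` matrix, and on `v_i ⊗ v_i` by the scalar `1 - z q` with `q = r s⁻¹`. At `z = q` the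
scalar is `(1 - q)(1 + q)` and the block becomes `1 - q` times a matrix of rank one whose kernel
is the line through `v_i ⊗ v_j - r v_j ⊗ v_i`. So for `q ≠ ±1` the kernel consists of the tensors
with vanishing diagonal and `f (j, i) = -r f (i, j)` for `i < j`, which are exactly the linear
combinations of the generators of `Λ²_{r,s}(V)`.
-/

open Matrix Kronecker BigOperators

section PiSingle

variable {ι M : Type*} [Fintype ι] [DecidableEq ι] [AddCommMonoid M]

lemma sum_sum_ite_pi_single_apply (P : ι → ι → Prop) [DecidableRel P] (g : ι → ι → M) (i k : ι) :
    (∑ a, ∑ b, if P a b then Pi.single (a, b) (g a b) else 0 : ι × ι → M) (i, k) =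
      if P i k then g i k else 0 := by
  have h (a b : ι) : (if P a b then Pi.single (a, b) (g a b) else 0 : ι × ι → M) =
      Pi.single (a, b) (if P a b then g a b else 0) := by
    split_ifs <;> simp
  simp_rw [h]
  rw [← Fintype.sum_prod_type'
      fun a b => (Pi.single (a, b) (if P a b then g a b else 0) : ι × ι → M),
    Finset.univ_sum_single]

lemma sum_pi_single_diag_apply (g : ι → M) (i k : ι) :
    (∑ a, Pi.single (a, a) (g a) : ι × ι → M) (i, k) = if i = k then g i else 0 := by
  simpa using sum_sum_ite_pi_single_apply (· = ·) (fun a _ => g a) i k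

end PiSingle

lemma E_kronecker_E_mulVec {n : ℕ} (a b c d : Fin n) (f : Fin n × Fin n → ℂ) :
    (E n a b ⊗ₖ E n c d) *ᵥ f = Pi.single (a, c) (f (b, d)) := by
  rw [E, E, single_kronecker_single, single_mulVec, one_mul, one_mul]; rfl

lemma Rz_mulVec_apply (n : ℕ) (r s z : ℂ) (f : Fin n × Fin n → ℂ) (i k : Fin n) :
    (Rz n r s z *ᵥ f) (i, k) =
      if i = k then (1 - z * (r * s⁻¹)) * f (i, i)
      else if i < k then z * (1 - r * s⁻¹) * f (i, k) + (1 - z) * s⁻¹ * f (k, i)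
      else (1 - r * s⁻¹) * f (i, k) + (1 - z) * r * f (k, i) := by
  simp only [Rz, add_mulVec, smul_mulVec, sum_mulVec, apply_ite (· *ᵥ f), zero_mulVec,
    E_kronecker_E_mulVec, Pi.add_apply, Pi.smul_apply, smul_eq_mul, sum_sum_ite_pi_single_apply,
    sum_pi_single_diag_apply]
  rcases lt_trichotomy i k with h | rfl | h
  · simp only [h.ne, ↓reduceIte, mul_zero, h.not_gt, h, zero_add, add_zero]; ring
  · simp
  · simp only [h.ne', ↓reduceIte, mul_zero, h, h.not_gt, add_zero, zero_add]; ring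

def twistedAntisymm (n : ℕ) (r : ℂ) : Submodule ℂ (Fin n × Fin n → ℂ) where
  carrier := {f | (∀ i, f (i, i) = 0) ∧ ∀ i k, i < k → f (k, i) = -(r * f (i, k))}
  add_mem' {f g} hf hg := ⟨fun i => by simp [hf.1, hg.1],
    fun i k h => by simp only [Pi.add_apply, hf.2 i k h, hg.2 i k h]; ring⟩
  zero_mem' := ⟨fun _ => rfl, fun _ _ _ => by simp⟩
  smul_mem' c f hf := ⟨fun i => by simp [hf.1],
    fun i k h => by simp only [Pi.smul_apply, smul_eq_mul, hf.2 i k h]; ring⟩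

lemma mem_twistedAntisymm {n : ℕ} {r : ℂ} {f : Fin n × Fin n → ℂ} :
    f ∈ twistedAntisymm n r ↔ (∀ i, f (i, i) = 0) ∧ ∀ i k, i < k → f (k, i) = -(r * f (i, k)) :=
  Iff.rfl

lemma ker_Rz_eq_twistedAntisymm {n : ℕ} {r s : ℂ} (hq : r * s⁻¹ ≠ 1) (hq' : r * s⁻¹ ≠ -1) :
    LinearMap.ker (Rz n r s (r * s⁻¹)).mulVecLin = twistedAntisymm n r := by
  have h1 : 1 - r * s⁻¹ ≠ 0 := sub_ne_zero.2 hq.symm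
  have h2 : 1 - r * s⁻¹ * (r * s⁻¹) ≠ 0 := by
    rw [show 1 - r * s⁻¹ * (r * s⁻¹) = (1 - r * s⁻¹) * (1 + r * s⁻¹) by ring]
    exact mul_ne_zero h1 fun h => hq' (by linear_combination h)
  ext f
  simp only [LinearMap.mem_ker, mulVecLin_apply, funext_iff, Prod.forall, Pi.zero_apply,
    Rz_mulVec_apply, mem_twistedAntisymm]
  constructor
  · intro h
    refine ⟨fun i => ?_, fun i k hik => ?_⟩
    · simpa [h2] using h i i
    · have := h k i
      rw [if_neg hik.ne', if_neg hik.not_gt] at this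
      exact mul_left_cancel₀ h1 (by linear_combination this)
  · rintro ⟨hdiag, hanti⟩ i k
    rcases lt_trichotomy i k with h | rfl | h
    · rw [if_neg h.ne, if_pos h, hanti i k h]; ring
    · simp [hdiag]
    · rw [if_neg h.ne', if_neg h.not_gt, hanti k i h]; ring

lemma single_sub_smul_single_mem_twistedAntisymm {n : ℕ} (r : ℂ) {i j : Fin n} (hij : i < j) :
    Pi.single (i, j) 1 - r • Pi.single (j, i) 1 ∈ twistedAntisymm n r := by
  refine ⟨fun k => ?_, fun k l hkl => ?_⟩ <;>
  · simp only [Pi.sub_apply, Pi.smul_apply, Pi.single_apply, Prod.mk.injEq, smul_eq_mul]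
    split_ifs <;> grind

lemma eq_sum_of_mem_twistedAntisymm {n : ℕ} {r : ℂ} {f : Fin n × Fin n → ℂ}
    (hf : f ∈ twistedAntisymm n r) :
    f = ∑ p : Fin n × Fin n,
      if p.1 < p.2 then f p • (Pi.single p 1 - r • Pi.single p.swap 1) else 0 := by
  ext ⟨a, b⟩
  have key (p : Fin n × Fin n) :
      (if p.1 < p.2 then f p • (Pi.single p 1 - r • Pi.single p.swap 1) else 0 :
        Fin n × Fin n → ℂ) (a, b) =
      (if p = (a, b) ∧ a < b then f (a, b) else 0) -
        (if p = (b, a) ∧ b < a then r * f (b, a) else 0) := by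
    rcases p with ⟨i, j⟩
    simp only [ite_apply, Pi.zero_apply, Pi.smul_apply, Pi.sub_apply, Pi.single_apply,
      Prod.swap_prod_mk, Prod.mk.injEq, smul_eq_mul]
    split_ifs <;> grind
  simp only [Finset.sum_apply, key, Finset.sum_sub_distrib, ite_and, Finset.sum_ite_eq',
    Finset.mem_univ, if_true]
  rcases lt_trichotomy a b with h | rfl | h
  · simp [h, h.not_gt]
  · simp [hf.1]
  · simp [h, h.not_gt, hf.2 b a h]

lemma Lsub_eq_twistedAntisymm (n : ℕ) (r : ℂ) : Lsub n r = twistedAntisymm n r := by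
  refine le_antisymm ((Submodule.span_le).2 ?_) fun f hf => ?_
  · rintro _ ⟨i, j, hij, rfl⟩
    exact single_sub_smul_single_mem_twistedAntisymm r hij
  · rw [eq_sum_of_mem_twistedAntisymm hf]
    refine Submodule.sum_mem _ fun p _ => ?_
    split_ifs with h
    · exact Submodule.smul_mem _ _ (Submodule.subset_span ⟨p.1, p.2, h, rfl⟩)
    · exact Submodule.zero_mem _

theorem stmt14_general (n : ℕ) (r s : ℂ) (hrs : r ≠ s) (hsr : s ≠ -r) :
    LinearMap.ker (Rz n r s (r * s⁻¹)).mulVecLin = Lsub n r := by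
  have hq : r * s⁻¹ ≠ 1 ∧ r * s⁻¹ ≠ -1 := by
    rcases eq_or_ne s 0 with rfl | hs
    · norm_num
    · rw [Ne, Ne, mul_inv_eq_one₀ hs, mul_inv_eq_iff_eq_mul₀ hs]
      exact ⟨hrs, fun h => hsr (by linear_combination h)⟩
  rw [ker_Rz_eq_twistedAntisymm hq.1 hq.2, Lsub_eq_twistedAntisymm]

/-- The kernel of `R(r s⁻¹)` on `V ⊗ V` equals `Λ²_{r,s}(V)`. -/
theorem stmt14 (n : ℕ) (hn : 2 ≤ n) (r s : ℂ) (hr : r ≠ 0) (hs : s ≠ 0) (hrs : r ≠ s) (hsr : s ≠ -r) :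
    LinearMap.ker (Rz n r s (r * s⁻¹)).mulVecLin = Lsub n r :=
  stmt14_general n r s hrs hsr
end

section
/- The image of the linear map R(r⁻¹ s) on V ⊗ V equals the subspace Λ²_{r,s}(V). -/
open Matrix Kronecker BigOperators

/-!
At `z = r⁻¹ s` the diagonal coefficient `1 - z r s⁻¹` of `R(z)` vanishes, so `R(z)` kills every
`v_k ⊗ v_k`. For `k < l` the column `R(z) (v_k ⊗ v_l) = z (1 - r s⁻¹) v_k ⊗ v_l + (1 - z) r v_l ⊗ v_k`
becomes `(r⁻¹ s - 1) (v_k ⊗ v_l - r v_l ⊗ v_k)`, and `R(z) (v_l ⊗ v_k)` is `s⁻¹ - r⁻¹` times the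
same vector. Since `r ≠ s` these multiples are nonzero, so the columns of `R(r⁻¹ s)` span exactly
`Λ²_{r,s}(V)`.
-/

section

variable {n : ℕ}

lemma E_kronecker_E_s16 (i j k l : Fin n) :
    E n i j ⊗ₖ E n k l = Matrix.single (i, k) (j, l) 1 := by
  rw [E, E, single_kronecker_single, one_mul]

lemma sum_single_diag_apply (a b : Fin n) (q : Fin n × Fin n) :
    (∑ i : Fin n, Matrix.single (i, i) (i, i) (1 : ℂ)) (a, b) q =
      if a = b ∧ (a, a) = q then 1 else 0 := by
  simp only [Matrix.sum_apply, Matrix.single_apply, Prod.mk.injEq]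
  rw [Finset.sum_eq_single a] <;> aesop

lemma sum_sum_ite_single_apply_s16 (P : Fin n → Fin n → Prop) [DecidableRel P]
    (σ : Fin n → Fin n → Fin n × Fin n) (a b : Fin n) (q : Fin n × Fin n) :
    (∑ i : Fin n, ∑ j : Fin n, if P i j then Matrix.single (i, j) (σ i j) (1 : ℂ) else 0)
      (a, b) q = if P a b ∧ σ a b = q then 1 else 0 := by
  rw [← Fintype.sum_prod_type'
    (f := fun i j => if P i j then Matrix.single (i, j) (σ i j) (1 : ℂ) else 0)]
  simp only [Matrix.sum_apply, apply_ite (fun M : Matrix _ _ ℂ => M (a, b) q),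
    Matrix.single_apply, Matrix.zero_apply]
  rw [Finset.sum_eq_single (a, b)] <;> aesop

lemma Rz_apply_s16 (r s z : ℂ) (a b : Fin n) (q : Fin n × Fin n) :
    Rz n r s z (a, b) q =
      (1 - z * (r * s⁻¹)) * (if a = b ∧ (a, a) = q then 1 else 0)
      + (1 - z) * (r * (if b < a ∧ (b, a) = q then 1 else 0)
          + s⁻¹ * (if a < b ∧ (b, a) = q then 1 else 0))
      + z * (1 - r * s⁻¹) * (if a < b ∧ (a, b) = q then 1 else 0)
      + (1 - r * s⁻¹) * (if b < a ∧ (a, b) = q then 1 else 0) := by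
  simp only [Rz, E_kronecker_E_s16, Matrix.add_apply, Matrix.smul_apply, smul_eq_mul,
    sum_single_diag_apply, sum_sum_ite_single_apply_s16]

variable (r s z : ℂ) {k l : Fin n}

lemma Rz_col_of_lt (h : k < l) :
    (Rz n r s z).col (k, l) =
      (z * (1 - r * s⁻¹)) • Pi.single (k, l) 1 + ((1 - z) * r) • Pi.single (l, k) 1 := by
  ext ⟨a, b⟩
  simp only [Matrix.col_apply, Rz_apply_s16, Pi.add_apply, Pi.smul_apply, Pi.single_apply,
    Prod.mk.injEq, smul_eq_mul]
  split_ifs <;> grind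

lemma Rz_col_of_gt (h : l < k) :
    (Rz n r s z).col (k, l) =
      (1 - r * s⁻¹) • Pi.single (k, l) 1 + ((1 - z) * s⁻¹) • Pi.single (l, k) 1 := by
  ext ⟨a, b⟩
  simp only [Matrix.col_apply, Rz_apply_s16, Pi.add_apply, Pi.smul_apply, Pi.single_apply,
    Prod.mk.injEq, smul_eq_mul]
  split_ifs <;> grind

lemma Rz_col_self (k : Fin n) :
    (Rz n r s z).col (k, k) = (1 - z * (r * s⁻¹)) • Pi.single (k, k) 1 := by
  ext ⟨a, b⟩
  simp only [Matrix.col_apply, Rz_apply_s16, Pi.smul_apply, Pi.single_apply, Prod.mk.injEq,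
    smul_eq_mul]
  split_ifs <;> grind

variable {r s}

lemma Rz_inv_mul_col_of_lt (hr : r ≠ 0) (hs : s ≠ 0) (h : k < l) :
    (Rz n r s (r⁻¹ * s)).col (k, l) =
      (r⁻¹ * s - 1) • (Pi.single (k, l) 1 - r • Pi.single (l, k) 1) := by
  rw [Rz_col_of_lt _ _ _ h]
  match_scalars
  · field_simp
  · field_simp
    ring

lemma Rz_inv_mul_col_of_gt (hr : r ≠ 0) (hs : s ≠ 0) (h : l < k) :
    (Rz n r s (r⁻¹ * s)).col (k, l) =
      (s⁻¹ - r⁻¹) • (Pi.single (l, k) 1 - r • Pi.single (k, l) 1) := by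
  rw [Rz_col_of_gt _ _ _ h]
  match_scalars
  · field_simp
    ring
  · field_simp

lemma Rz_inv_mul_col_self (hr : r ≠ 0) (hs : s ≠ 0) (k : Fin n) :
    (Rz n r s (r⁻¹ * s)).col (k, k) = 0 := by
  rw [Rz_col_self, mul_mul_mul_comm, inv_mul_cancel₀ hr, mul_inv_cancel₀ hs]
  simp

end

theorem stmt16_general (n : ℕ) (r s : ℂ) (hr : r ≠ 0) (hs : s ≠ 0) (hrs : r ≠ s) :
    LinearMap.range (Rz n r s (r⁻¹ * s)).mulVecLin = Lsub n r := by
  have hc : r⁻¹ * s - 1 ≠ 0 := by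
    rw [Ne, sub_eq_zero, inv_mul_eq_one₀ hr]
    exact hrs
  rw [Matrix.range_mulVecLin, Lsub]
  apply Submodule.span_eq_span
  · rintro _ ⟨⟨k, l⟩, rfl⟩
    rcases lt_trichotomy k l with hkl | rfl | hlk
    · rw [Rz_inv_mul_col_of_lt hr hs hkl]
      exact Submodule.smul_mem _ _ (Submodule.subset_span ⟨k, l, hkl, rfl⟩)
    · rw [Rz_inv_mul_col_self hr hs]
      exact Submodule.zero_mem _
    · rw [Rz_inv_mul_col_of_gt hr hs hlk]
      exact Submodule.smul_mem _ _ (Submodule.subset_span ⟨l, k, hlk, rfl⟩)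
  · rintro _ ⟨i, j, hij, rfl⟩
    rw [← inv_smul_smul₀ hc (_ - _), ← Rz_inv_mul_col_of_lt hr hs hij]
    exact Submodule.smul_mem _ _ (Submodule.subset_span ⟨(i, j), rfl⟩)

/-- The image of `R(r⁻¹ s)` on `V ⊗ V` equals `Λ²_{r,s}(V)`. -/
theorem stmt16 (n : ℕ) (hn : 2 ≤ n) (r s : ℂ) (hr : r ≠ 0) (hs : s ≠ 0) (hrs : r ≠ s) (hsr : s ≠ -r) :
    LinearMap.range (Rz n r s (r⁻¹ * s)).mulVecLin = Lsub n r :=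
  stmt16_general n r s hr hs hrs
end

section
/- For every integer k with 2 ≤ k, the quotient vector space V^{⊗k} / Σ_{i=0}^{k-2} V^{⊗i} ⊗ S²_{r,s}(V) ⊗ V^{⊗(k−i−2)} has dimension equal to the binomial coefficient C(n, k) (in particular it is zero when k > n). -/
open Matrix Kronecker BigOperators

/-- Generators of `∑_{p} V^{⊗p} ⊗ S²_{r,s}(V) ⊗ V^{⊗(k−p−2)}` inside
`V^{⊗k}`, with `V^{⊗k}` modelled as `(Fin k → Fin n) → ℂ` and the pure tensor of
basis vectors `v_{m 0} ⊗ ⋯ ⊗ v_{m (k-1)}` modelled as `Pi.single m 1`.  For each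
pair of adjacent positions `p, q = p+1` and each assignment `m` of basis indices,
the generator places `v_i ⊗ v_i` (when `m p = m q`) or
`v_i ⊗ v_j + s v_j ⊗ v_i` (when `m p < m q`) in positions `p, q`, and basis
vectors elsewhere. -/
def wedgeGens (n k : ℕ) (s : ℂ) : Set ((Fin k → Fin n) → ℂ) :=
  { f | ∃ p q : Fin k, (p : ℕ) + 1 = (q : ℕ) ∧ ∃ m : Fin k → Fin n,
      (m p = m q ∧ f = (Pi.single m 1 : (Fin k → Fin n) → ℂ)) ∨
      (m p < m q ∧ f = (Pi.single m 1 : (Fin k → Fin n) → ℂ)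
        + s • (Pi.single (Function.update (Function.update m p (m q)) q (m p)) 1 :
            (Fin k → Fin n) → ℂ)) }

/-!
Call a basis tensor `e_m = v_{m 0} ⊗ ⋯ ⊗ v_{m (k-1)}` reduced when `m` is strictly decreasing.
Modulo the relations, `e_m` vanishes when `m` has two equal adjacent entries, and
`e_m ≡ -s e_{m ∘ τ}` when `m` ascends at an adjacent pair swapped by `τ`; the swap removes
exactly one ascent pair, so by induction the reduced tensors span the quotient. Conversely,
weighting `e_{d ∘ σ}` by `(-s) ^ (number of ascent pairs of d ∘ σ)` and summing over `σ`
gives, for each reduced `d`, a functional that kills every relation; these functionals are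
dual to the reduced tensors, so the quotient has a basis indexed by the `k`-subsets of `Fin n`.
-/

open Finset

section AscentPairs

variable {α : Type*} [LinearOrder α] {k : ℕ}

def ascentPairs (m : Fin k → α) : Finset (Fin k × Fin k) :=
  {ij | ij.1 < ij.2 ∧ m ij.1 < m ij.2}

theorem ascentPairs_eq_empty_of_strictAnti {m : Fin k → α} (hm : StrictAnti m) :
    ascentPairs m = ∅ := by
  ext ⟨i, j⟩
  simpa [ascentPairs] using fun h => (hm h).le

theorem swap_lt_swap_iff_of_adjacent {p q i j : Fin k} (hpq : (p : ℕ) + 1 = q)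
    (hi : ¬(i = p ∧ j = q)) (hj : ¬(i = q ∧ j = p)) :
    Equiv.swap p q i < Equiv.swap p q j ↔ i < j := by
  simp only [Equiv.swap_apply_def, Fin.ext_iff, Fin.lt_def, not_and] at *
  split_ifs <;> omega

theorem map_ascentPairs_comp_swap {m : Fin k → α} {p q : Fin k} (hpq : (p : ℕ) + 1 = q)
    (h : m p < m q) :
    (ascentPairs (m ∘ Equiv.swap p q)).map
        ((Equiv.swap p q).prodCongr (Equiv.swap p q)).toEmbedding =
      (ascentPairs m).erase (p, q) := by
  ext ⟨i, j⟩
  simp only [mem_map_equiv, Equiv.prodCongr_symm, Equiv.symm_swap, Equiv.prodCongr_apply,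
    Prod.map, ascentPairs, mem_filter, mem_univ, true_and, Function.comp_apply,
    Equiv.swap_apply_self, mem_erase, ne_eq, Prod.mk.injEq]
  by_cases hij : i = p ∧ j = q
  · obtain ⟨rfl, rfl⟩ := hij
    simpa using fun hqp => absurd hqp (by rw [Fin.lt_def]; omega)
  by_cases hji : i = q ∧ j = p
  · obtain ⟨rfl, rfl⟩ := hji
    simp [lt_asymm h]
  rw [swap_lt_swap_iff_of_adjacent hpq hij hji]
  tauto

theorem card_ascentPairs_comp_swap {m : Fin k → α} {p q : Fin k} (hpq : (p : ℕ) + 1 = q)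
    (h : m p < m q) :
    #(ascentPairs (m ∘ Equiv.swap p q)) + 1 = #(ascentPairs m) := by
  have hmem : (p, q) ∈ ascentPairs m := by
    simp [ascentPairs, Fin.lt_def.mpr (by omega : (p : ℕ) < q), h]
  rw [← card_map, map_ascentPairs_comp_swap hpq h, card_erase_add_one hmem]

theorem strictAnti_of_adjacent {m : Fin k → α}
    (h : ∀ p q : Fin k, (p : ℕ) + 1 = q → m q < m p) : StrictAnti m := by
  refine strictAnti_of_succ_lt fun a ha => h _ _ ?_
  exact Nat.covBy_iff_add_one_eq.mp (Fin.covBy_iff.mp (Order.covBy_succ_of_not_isMax ha))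

end AscentPairs

theorem finrank_quotient_eq_natCard_of_dual_family {K M ι : Type*} [Field K] [AddCommGroup M]
    [Module K M] [Finite ι] [DecidableEq ι] {W : Submodule K M} (L : M →ₗ[K] ι → K)
    (hW : W ≤ LinearMap.ker L) (b : ι → M) (hLb : ∀ i, L (b i) = Pi.single i 1)
    (hspan : W ⊔ Submodule.span K (Set.range b) = ⊤) :
    Module.finrank K (M ⧸ W) = Nat.card ι := by
  have := Fintype.ofFinite ι
  have hL_sum (c : ι → K) : L (∑ i, c i • b i) = c := by
    simp only [map_sum, map_smul, hLb]
    exact (pi_eq_sum_univ' c).symm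
  have hker : LinearMap.ker L = W := by
    refine le_antisymm (fun x hx => ?_) hW
    obtain ⟨w, hw, t, ht, rfl⟩ := Submodule.mem_sup.mp (hspan ▸ Submodule.mem_top : x ∈ _)
    obtain ⟨c, rfl⟩ := (Submodule.mem_span_range_iff_exists_fun K).mp ht
    have hc : c = 0 := by
      rw [LinearMap.mem_ker, map_add, hW hw, zero_add, hL_sum] at hx
      exact hx
    simpa [hc] using hw
  have hsurj : Function.Surjective L := fun c => ⟨_, hL_sum c⟩
  rw [← hker, (L.quotKerEquivOfSurjective hsurj).finrank_eq, Module.finrank_fintype_fun_eq_card,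
    Nat.card_eq_fintype_card]

section Wedge

variable {n k : ℕ}

abbrev StrictAntiTuple (n k : ℕ) := {d : Fin k → Fin n // StrictAnti d}

theorem eq_one_of_strictAnti_comp {d : Fin k → Fin n} (hd : StrictAnti d)
    {σ : Equiv.Perm (Fin k)} (hdσ : StrictAnti (d ∘ σ)) : σ = 1 := by
  have hσ : StrictMono σ := fun i j hij => hd.lt_iff_gt.mp (hdσ hij)
  exact Equiv.ext (congrFun hσ.eq_id)

noncomputable def wedgeFunctional (s : ℂ) :
    ((Fin k → Fin n) → ℂ) →ₗ[ℂ] (StrictAntiTuple n k → ℂ) :=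
  LinearMap.pi fun d => ∑ σ : Equiv.Perm (Fin k),
    (-s) ^ #(ascentPairs (d.1 ∘ σ)) • LinearMap.proj (d.1 ∘ σ)

theorem wedgeFunctional_apply (s : ℂ) (f : (Fin k → Fin n) → ℂ)
    (d : StrictAntiTuple n k) :
    wedgeFunctional s f d =
      ∑ σ : Equiv.Perm (Fin k), (-s) ^ #(ascentPairs (d.1 ∘ σ)) * f (d.1 ∘ σ) := by
  simp [wedgeFunctional]

theorem wedgeFunctional_single_apply (s : ℂ) (m : Fin k → Fin n)
    (d : StrictAntiTuple n k) :
    wedgeFunctional s (Pi.single m 1) d =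
      if ∃ σ : Equiv.Perm (Fin k), d.1 ∘ σ = m then (-s) ^ #(ascentPairs m) else 0 := by
  rw [wedgeFunctional_apply]
  split_ifs with h
  · obtain ⟨σ, rfl⟩ := h
    rw [sum_eq_single σ (fun τ _ hτ => ?_) (by simp)]
    · simp
    · have hne : d.1 ∘ τ ≠ d.1 ∘ σ :=
        (d.2.injective.comp_left.comp DFunLike.coe_injective).ne hτ
      simp [hne]
  · exact sum_eq_zero fun σ _ => by rw [Pi.single_eq_of_ne fun heq => h ⟨σ, heq⟩, mul_zero]

theorem wedgeFunctional_single_of_not_injective (s : ℂ) {m : Fin k → Fin n}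
    (hm : ¬Function.Injective m) : wedgeFunctional s (Pi.single m 1) = 0 := by
  funext d
  rw [wedgeFunctional_single_apply, if_neg]
  · rfl
  · rintro ⟨σ, rfl⟩
    exact hm (d.2.injective.comp σ.injective)

theorem wedgeFunctional_single_add_smul_single_comp_swap (s : ℂ) {m : Fin k → Fin n}
    {p q : Fin k} (hpq : (p : ℕ) + 1 = q) (h : m p < m q) :
    wedgeFunctional s (Pi.single m 1 + s • Pi.single (m ∘ Equiv.swap p q) 1) = 0 := by
  funext d
  have hτ : (∃ σ : Equiv.Perm (Fin k), d.1 ∘ σ = m ∘ Equiv.swap p q) ↔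
      ∃ σ : Equiv.Perm (Fin k), d.1 ∘ σ = m := by
    refine ⟨fun ⟨σ, hσ⟩ => ⟨σ * Equiv.swap p q, ?_⟩,
      fun ⟨σ, hσ⟩ => ⟨σ * Equiv.swap p q, ?_⟩⟩
    · funext i
      simpa using congrFun hσ (Equiv.swap p q i)
    · rw [← hσ]
      rfl
  simp only [map_add, map_smul, Pi.add_apply, Pi.smul_apply, Pi.zero_apply,
    wedgeFunctional_single_apply, hτ]
  split_ifs
  · rw [← card_ascentPairs_comp_swap hpq h, pow_succ]
    ring
  · simp

theorem wedgeFunctional_single_strictAnti (s : ℂ) (d : StrictAntiTuple n k) :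
    wedgeFunctional s (Pi.single d.1 1) = Pi.single d 1 := by
  funext d'
  have : (∃ σ : Equiv.Perm (Fin k), d'.1 ∘ σ = d.1) ↔ d' = d := by
    refine ⟨fun ⟨σ, hσ⟩ => ?_, fun h => ⟨1, by simp [h]⟩⟩
    obtain rfl : σ = 1 := eq_one_of_strictAnti_comp d'.2 (hσ ▸ d.2)
    exact Subtype.ext hσ
  rw [wedgeFunctional_single_apply, if_congr this rfl rfl]
  by_cases h : d' = d
  · simp [h, ascentPairs_eq_empty_of_strictAnti d.2]
  · simp [h]

theorem span_wedgeGens_le_ker_wedgeFunctional (s : ℂ) :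
    Submodule.span ℂ (wedgeGens n k s) ≤ LinearMap.ker (wedgeFunctional s) := by
  rw [Submodule.span_le]
  rintro _ ⟨p, q, hpq, m, ⟨heq, rfl⟩ | ⟨hlt, rfl⟩⟩
  · have hne : p ≠ q := fun h => by simp [h] at hpq
    exact wedgeFunctional_single_of_not_injective s fun hm => hne (hm heq)
  · rw [SetLike.mem_coe, LinearMap.mem_ker, ← Equiv.comp_swap_eq_update q p m, Equiv.swap_comm]
    exact wedgeFunctional_single_add_smul_single_comp_swap s hpq hlt

theorem single_mem_span_wedgeGens_sup (s : ℂ) (m : Fin k → Fin n) :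
    Pi.single m 1 ∈ Submodule.span ℂ (wedgeGens n k s) ⊔
      Submodule.span ℂ (Set.range fun d : StrictAntiTuple n k => Pi.single d.1 1) := by
  induction hN : #(ascentPairs m) using Nat.strong_induction_on generalizing m with
  | _ N ih =>
  by_cases hm : StrictAnti m
  · exact Submodule.mem_sup_right (Submodule.subset_span ⟨⟨m, hm⟩, rfl⟩)
  obtain ⟨p, q, hpq, hle⟩ : ∃ p q : Fin k, (p : ℕ) + 1 = q ∧ m p ≤ m q := by
    contrapose! hm
    exact strictAnti_of_adjacent hm
  rcases hle.eq_or_lt with heq | hlt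
  · exact Submodule.mem_sup_left (Submodule.subset_span ⟨p, q, hpq, m, Or.inl ⟨heq, rfl⟩⟩)
  · have hgen : Pi.single m 1 + s • Pi.single (m ∘ Equiv.swap p q) 1 ∈ wedgeGens n k s := by
      refine ⟨p, q, hpq, m, Or.inr ⟨hlt, ?_⟩⟩
      rw [Equiv.swap_comm, Equiv.comp_swap_eq_update]
    have hswap := ih _ (by have := card_ascentPairs_comp_swap hpq hlt; omega)
      (m ∘ Equiv.swap p q) rfl
    rw [← add_sub_cancel_right (Pi.single m 1) (s • Pi.single (m ∘ Equiv.swap p q) 1)]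
    exact sub_mem (Submodule.mem_sup_left (Submodule.subset_span hgen))
      (Submodule.smul_mem _ s hswap)

theorem span_wedgeGens_sup_eq_top (s : ℂ) :
    Submodule.span ℂ (wedgeGens n k s) ⊔
      Submodule.span ℂ (Set.range fun d : StrictAntiTuple n k => Pi.single d.1 1) =
        ⊤ := by
  rw [eq_top_iff, ← (Pi.basisFun ℂ (Fin k → Fin n)).span_eq, Submodule.span_le]
  rintro _ ⟨m, rfl⟩
  simpa using single_mem_span_wedgeGens_sup s m

theorem card_strictAnti : Nat.card (StrictAntiTuple n k) = n.choose k := by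
  let e : StrictAntiTuple n k ≃ (Fin k ↪o (Fin n)ᵒᵈ) :=
    { toFun := fun d => OrderEmbedding.ofStrictMono (OrderDual.toDual ∘ d.1) d.2.dual_right
      invFun := fun f => ⟨OrderDual.ofDual ∘ f, f.strictMono.dual_right⟩
      left_inv := fun _ => rfl
      right_inv := fun _ => rfl }
  rw [Nat.card_congr (e.trans Set.powersetCard.ofFinEmbEquiv), Set.powersetCard.card]
  simp

end Wedge

theorem stmt17_general (n : ℕ) (s : ℂ) (k : ℕ) :
    Module.finrank ℂ (((Fin k → Fin n) → ℂ) ⧸ Submodule.span ℂ (wedgeGens n k s))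
      = Nat.choose n k := by
  rw [finrank_quotient_eq_natCard_of_dual_family (wedgeFunctional s)
    (span_wedgeGens_le_ker_wedgeFunctional s) _ (wedgeFunctional_single_strictAnti s)
    (span_wedgeGens_sup_eq_top s), card_strictAnti]

/-- The `(r,s)`-wedge space
`V^{⊗k} / ∑_i V^{⊗i} ⊗ S²_{r,s}(V) ⊗ V^{⊗(k−i−2)}` has dimension `C(n, k)`. -/
theorem stmt17 (n : ℕ) (hn : 2 ≤ n) (r s : ℂ) (hr : r ≠ 0) (hs : s ≠ 0) (hrs : r ≠ s) (hsr : s ≠ -r) (k : ℕ) (hk : 2 ≤ k) :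
    Module.finrank ℂ (((Fin k → Fin n) → ℂ) ⧸ Submodule.span ℂ (wedgeGens n k s))
      = Nat.choose n k :=
  stmt17_general n s k
end

section
/- For every integer k with 2 ≤ k ≤ n and every i with 1 ≤ i ≤ n−1, the coproduct action of the generator e_i on V^{⊗k}, given by the operator Δ^{(k)}(e_i) = Σ_{j=1}^{k} ω_i^{⊗(j−1)} ⊗ E_{i,i+1} ⊗ I^{⊗(k−j)} (where ω_i = r E_{ii} + s E_{i+1,i+1} + Σ_{m ≠ i,i+1} E_{mm}), maps the vector v_1 ⊗ v_2 ⊗ ⋯ ⊗ v_k into the subspace Σ_{j=0}^{k-2} V^{⊗j} ⊗ S²_{r,s}(V) ⊗ V^{⊗(k−j−2)} of V^{⊗k}. -/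
open Matrix Kronecker BigOperators

/-- The tensor product `A 0 ⊗ A 1 ⊗ ⋯ ⊗ A (k-1)` of `n × n` matrices, acting on
`V^{⊗k}` modelled as `(Fin k → Fin n) → ℂ`. -/
noncomputable def tensorMat (n k : ℕ) (A : Fin k → Matrix (Fin n) (Fin n) ℂ) :
    Matrix (Fin k → Fin n) (Fin k → Fin n) ℂ :=
  fun m m' => ∏ t : Fin k, A t (m t) (m' t)

/-- The matrix `ω_i = r E_{ii} + s E_{i+1,i+1} + ∑_{m ≠ i,i+1} E_{mm}` of the natural
representation (here `i'` stands for `i+1`). -/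
noncomputable def omegaMat (n : ℕ) (r s : ℂ) (i i' : Fin n) : Matrix (Fin n) (Fin n) ℂ :=
  r • E n i i + s • E n i' i' + ∑ m : Fin n, if m ≠ i ∧ m ≠ i' then E n m m else 0

/-- The coproduct action `Δ^{(k)}(e_i) = ∑_j ω_i^{⊗(j−1)} ⊗ E_{i,i+1} ⊗ I^{⊗(k−j)}`
on `V^{⊗k}`. -/
noncomputable def coprodE (n k : ℕ) (r s : ℂ) (i i' : Fin n) :
    Matrix (Fin k → Fin n) (Fin k → Fin n) ℂ :=
  ∑ j : Fin k, tensorMat n k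
    (fun t => if t < j then omegaMat n r s i i' else if t = j then E n i i' else 1)

/-! Every factor of every summand `ω_i^{⊗(j−1)} ⊗ E_{i,i+1} ⊗ I^{⊗(k−j)}` sends a basis vector
to a multiple of a basis vector, so each summand sends `v_1 ⊗ ⋯ ⊗ v_k` to a multiple of a pure
tensor. `E_{i,i+1} v_j = 0` unless `j = i+1`, and the surviving summand `j = i+1` gives a
multiple of the pure tensor carrying `v_i ⊗ v_i` in positions `i, i+1`, which lies in
`V^{⊗(i−1)} ⊗ S²_{r,s}(V) ⊗ V^{⊗(k−i−1)}`. -/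

theorem Matrix.col_eq_single_of_apply_eq_zero {m ι R : Type*} [DecidableEq m] [Zero R]
    (M : Matrix m ι R) (j : ι) (y : m) (h : ∀ a, a ≠ y → M a j = 0) :
    M.col j = Pi.single y (M y j) := by
  ext a
  by_cases ha : a = y
  · subst ha; simp
  · simp [ha, h a ha]

theorem tensorMat_apply_eq_zero {n k : ℕ} {A : Fin k → Matrix (Fin n) (Fin n) ℂ}
    {x y m : Fin k → Fin n} (h : ∀ t a, a ≠ y t → A t a (x t) = 0) (hm : m ≠ y) :
    tensorMat n k A m x = 0 := by
  obtain ⟨t, ht⟩ := Function.ne_iff.mp hm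
  exact Finset.prod_eq_zero (Finset.mem_univ t) (h t (m t) ht)

theorem tensorMat_mulVec_single {n k : ℕ} {A : Fin k → Matrix (Fin n) (Fin n) ℂ}
    {x y : Fin k → Fin n} (h : ∀ t a, a ≠ y t → A t a (x t) = 0) :
    tensorMat n k A *ᵥ Pi.single x 1 = Pi.single y (tensorMat n k A y x) := by
  rw [mulVec_single_one]
  exact col_eq_single_of_apply_eq_zero _ _ _ fun m hm => tensorMat_apply_eq_zero h hm

theorem E_apply_eq_zero_of_ne_left {n : ℕ} {i j a b : Fin n} (h : a ≠ i) : E n i j a b = 0 := by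
  simp [E, Ne.symm h]

theorem E_apply_eq_zero_of_ne_right {n : ℕ} {i j a b : Fin n} (h : b ≠ j) : E n i j a b = 0 := by
  simp [E, Ne.symm h]

theorem isDiag_E_self {n : ℕ} (a : Fin n) : (E n a a).IsDiag := fun b c h => by
  simp only [E, single_apply]
  grind

theorem isDiag_omegaMat (n : ℕ) (r s : ℂ) (i i' : Fin n) : (omegaMat n r s i i').IsDiag := by
  refine (((isDiag_E_self i).smul r).add ((isDiag_E_self i').smul s)).add
    (Finset.sum_induction _ IsDiag (fun _ _ => IsDiag.add) isDiag_zero fun m _ => ?_)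
  split_ifs
  exacts [isDiag_E_self m, isDiag_zero]

theorem coprodE_factor_apply_eq_zero {n k : ℕ} (r s : ℂ) (i i' : Fin n) (x : Fin k → Fin n)
    (j t : Fin k) {a : Fin n} (ha : a ≠ Function.update x j i t) :
    (if t < j then omegaMat n r s i i' else if t = j then E n i i' else 1) a (x t) = 0 := by
  split_ifs with hlt heq
  · rw [Function.update_of_ne hlt.ne] at ha
    exact isDiag_omegaMat n r s i i' ha
  · subst heq
    exact E_apply_eq_zero_of_ne_left (by simpa using ha)
  · rw [Function.update_of_ne heq] at ha
    exact one_apply_ne ha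

theorem single_mem_span_wedgeGens {n k : ℕ} (s : ℂ) {p q : Fin k} (hpq : (p : ℕ) + 1 = q)
    {m : Fin k → Fin n} (hm : m p = m q) (c : ℂ) :
    Pi.single m c ∈ Submodule.span ℂ (wedgeGens n k s) := by
  rw [show Pi.single m c = c • Pi.single m (1 : ℂ) by rw [← Pi.single_smul', smul_eq_mul, mul_one]]
  exact Submodule.smul_mem _ c (Submodule.subset_span ⟨p, q, hpq, m, Or.inl ⟨hm, rfl⟩⟩)

theorem stmt18_general (n : ℕ) (r s : ℂ) (k : ℕ) (hkn : k ≤ n)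
    (i : Fin n) (hi : (i : ℕ) + 1 < n) :
    (coprodE n k r s i ⟨(i : ℕ) + 1, hi⟩).mulVec
        (Pi.single (fun t : Fin k => ⟨(t : ℕ), lt_of_lt_of_le t.isLt hkn⟩) 1)
      ∈ Submodule.span ℂ (wedgeGens n k s) := by
  set i' : Fin n := ⟨(i : ℕ) + 1, hi⟩
  set x : Fin k → Fin n := fun t => ⟨(t : ℕ), lt_of_lt_of_le t.isLt hkn⟩
  rw [coprodE, sum_mulVec]
  refine Submodule.sum_mem _ fun j _ => ?_
  rw [tensorMat_mulVec_single (coprodE_factor_apply_eq_zero r s i i' x j)]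
  by_cases hj : (j : ℕ) = i + 1
  · refine single_mem_span_wedgeGens s (p := ⟨i, by omega⟩) (q := j) hj.symm ?_ _
    have hij : (⟨i, by omega⟩ : Fin k) ≠ j := fun h => by simp [← h] at hj
    simp [Function.update_of_ne hij, x]
  · have hxj : x j ≠ i' := fun h => hj (by simpa [x, i'] using congrArg Fin.val h)
    convert (Submodule.span ℂ (wedgeGens n k s)).zero_mem
    rw [Pi.single_eq_zero_iff]
    exact Finset.prod_eq_zero (Finset.mem_univ j) (by simpa using E_apply_eq_zero_of_ne_right hxj)

/-- `Δ^{(k)}(e_i)` maps `v_1 ⊗ ⋯ ⊗ v_k` into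
`∑_j V^{⊗j} ⊗ S²_{r,s}(V) ⊗ V^{⊗(k−j−2)}`. -/
theorem stmt18 (n : ℕ) (hn : 2 ≤ n) (r s : ℂ) (hr : r ≠ 0) (hs : s ≠ 0) (hrs : r ≠ s) (hsr : s ≠ -r) (k : ℕ) (hk : 2 ≤ k) (hkn : k ≤ n)
    (i : Fin n) (hi : (i : ℕ) + 1 < n) :
    (coprodE n k r s i ⟨(i : ℕ) + 1, hi⟩).mulVec
        (Pi.single (fun t : Fin k => ⟨(t : ℕ), lt_of_lt_of_le t.isLt hkn⟩) 1)
      ∈ Submodule.span ℂ (wedgeGens n k s) :=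
  stmt18_general n r s k hkn i hi
end
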